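/- There exists a constant K̂(d) > 0 such that R_d(ρ) ≥ K̂(d)·δT^{sc}_1(ρ) for all ρ ≥ 0, where R_d(ρ) = ∫₀^∞ (√ρ − √f(e))_+² de with f(e) = (|S^{d−1}|/(d(2π)^d))·((1+e)^{d/2} − (1−e)_+^{d/2}), and δT^{sc}_1(ρ) = (ρ0+ρ)^{1+2/d} − ρ0^{1+2/d} − ((d+2)/d)ρ0^{2/d}ρ with ρ0 = |S^{d−1}|·(2π)^{−d}/d. -/

import Mathlib

open MeasureTheory Real

/-- The surface area `|S^{d-1}|` of the unit sphere in `ℝ^d`. -/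
noncomputable def sphereArea (d : ℕ) : ℝ :=
  d * (volume (Metric.ball (0 : EuclideanSpace ℝ (Fin d)) 1)).toReal

/-- The free Fermi gas density `ρ0 = |S^{d−1}|/(d(2π)^d)` at `μ = 1`. -/
noncomputable def rho0 (d : ℕ) : ℝ := sphereArea d / (d * (2 * π) ^ d)

/-- `f(e) = ρ0 ((1+e)^{d/2} − (1−e)_+^{d/2})`. -/
noncomputable def fvol (d : ℕ) (e : ℝ) : ℝ :=
  rho0 d * ((1 + e) ^ ((d : ℝ) / 2) - (max (1 - e) 0) ^ ((d : ℝ) / 2))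

/-- `R_d(ρ) = ∫₀^∞ (√ρ − √f(e))_+² de`. -/
noncomputable def Rfun (d : ℕ) (ρ : ℝ) : ℝ :=
  ∫ e in Set.Ioi (0 : ℝ), (max (Real.sqrt ρ - Real.sqrt (fvol d e)) 0) ^ 2

/-- `δT^{sc}_1(ρ)` with background density `ρ0 = |S^{d−1}|/(d(2π)^d)`. -/
noncomputable def deltaTsc1 (d : ℕ) (ρ : ℝ) : ℝ :=
  (rho0 d + ρ) ^ (1 + 2 / (d : ℝ)) - (rho0 d) ^ (1 + 2 / (d : ℝ))
    - (((d : ℝ) + 2) / d) * (rho0 d) ^ (2 / (d : ℝ)) * ρ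

lemma rho0_pos (d : ℕ) (hd : 1 ≤ d) : 0 < rho0 d := by
  have h1 : (0:ℝ) < (d:ℝ) := by exact_mod_cast Nat.pos_of_ne_zero (by omega)
  have hb : 0 < volume (Metric.ball (0 : EuclideanSpace ℝ (Fin d)) 1) :=
    Metric.measure_ball_pos _ _ one_pos
  have hb2 : volume (Metric.ball (0 : EuclideanSpace ℝ (Fin d)) 1) ≠ ⊤ :=
    measure_ball_lt_top.ne
  have hs : 0 < sphereArea d := mul_pos h1 (ENNReal.toReal_pos hb.ne' hb2)
  have hden : 0 < (d:ℝ) * (2*π)^d := by positivity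
  exact div_pos hs hden

lemma fvol_mono (d : ℕ) {a b : ℝ} (ha : 0 ≤ a) (hab : a ≤ b) :
    fvol d a ≤ fvol d b := by
  have h0 : 0 ≤ rho0 d := by
    unfold rho0 sphereArea
    positivity
  apply mul_le_mul_of_nonneg_left _ h0
  apply sub_le_sub
  · exact Real.rpow_le_rpow (by linarith) (by linarith) (by positivity)
  · exact Real.rpow_le_rpow (le_max_right _ _) (max_le_max (by linarith) le_rfl) (by positivity)

lemma rho0_nonneg (d : ℕ) : 0 ≤ rho0 d := by
  unfold rho0 sphereArea; positivity

lemma fvol_nonneg (d : ℕ) {e : ℝ} (he : 0 ≤ e) : 0 ≤ fvol d e := by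
  have h0 : 0 ≤ rho0 d := rho0_nonneg d
  have : (max (1 - e) 0 : ℝ) ^ ((d:ℝ)/2) ≤ (1 + e) ^ ((d:ℝ)/2) :=
    Real.rpow_le_rpow (le_max_right _ _) (by rcases max_cases (1-e) (0:ℝ) with ⟨h,_⟩|⟨h,_⟩ <;> rw [h] <;> linarith) (by positivity)
  exact mul_nonneg h0 (sub_nonneg.2 this)

lemma pow_aux (n : ℕ) {e : ℝ} (he0 : 0 ≤ e) (he1 : e ≤ 1) :
    (1+e)^n ≤ 1 + ((2:ℝ)^n - 1)*e := by
  induction n with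
  | zero => simp
  | succ n ih =>
    have h2 : (1:ℝ) ≤ 2^n := one_le_pow₀ one_le_two
    have hee : e*e ≤ e := by nlinarith
    calc (1+e)^(n+1) = (1+e)^n * (1+e) := pow_succ _ _
    _ ≤ (1 + ((2:ℝ)^n - 1)*e) * (1+e) := by
        apply mul_le_mul_of_nonneg_right ih (by linarith)
    _ ≤ 1 + ((2:ℝ)^(n+1) - 1)*e := by ring_nf; nlinarith

lemma fvol_le_pow (d : ℕ) {e : ℝ} (he : 0 ≤ e) :
    fvol d e ≤ rho0 d * (1+e) ^ ((d:ℝ)/2) := by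
  have h0 : 0 ≤ rho0 d := rho0_nonneg d
  have hm : (0:ℝ) ≤ (max (1 - e) 0) ^ ((d:ℝ)/2) := Real.rpow_nonneg (le_max_right _ _) _
  unfold fvol
  nlinarith [mul_nonneg h0 hm]

lemma fvol_le_linear (d : ℕ) (hd : 1 ≤ d) {e : ℝ} (he0 : 0 ≤ e) (he1 : e ≤ 1) :
    fvol d e ≤ rho0 d * ((2:ℝ)^d + d) * e := by
  have h0 : 0 ≤ rho0 d := rho0_nonneg d
  have hdr : (1:ℝ) ≤ (d:ℝ) := by exact_mod_cast hd
  have hp : (0:ℝ) < (d:ℝ)/2 := by linarith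
  have hpd : (d:ℝ)/2 ≤ (d:ℝ) := by linarith
  -- upper part
  have hA : (1+e) ^ ((d:ℝ)/2) ≤ 1 + ((2:ℝ)^d - 1)*e := by
    calc (1+e) ^ ((d:ℝ)/2) ≤ (1+e) ^ ((d:ℝ)) :=
          Real.rpow_le_rpow_of_exponent_le (by linarith) hpd
    _ = (1+e)^d := by rw [Real.rpow_natCast]
    _ ≤ 1 + ((2:ℝ)^d - 1)*e := pow_aux d he0 he1
  -- lower part
  have hB : 1 - (d:ℝ)*e ≤ (max (1 - e) 0) ^ ((d:ℝ)/2) := by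
    have hmax : max (1 - e) 0 = 1 - e := max_eq_left (by linarith)
    rw [hmax]
    rcases eq_or_lt_of_le he1 with h1 | h1
    · subst h1
      simp only [sub_self]
      rw [Real.zero_rpow hp.ne']
      linarith
    · have hlt : (0:ℝ) < 1 - e := by linarith
      calc 1 - (d:ℝ)*e ≤ (1-e)^d := by
            have := one_add_mul_le_pow (a := -e) (by linarith) d
            calc 1 - (d:ℝ)*e = 1 + (d:ℝ)*(-e) := by ring
            _ ≤ (1 + -e)^d := this
            _ = (1-e)^d := by ring_nf
      _ = (1-e) ^ ((d:ℝ)) := (Real.rpow_natCast _ _).symm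
      _ ≤ (1-e) ^ ((d:ℝ)/2) :=
            Real.rpow_le_rpow_of_exponent_ge hlt (by linarith) hpd
  unfold fvol
  calc rho0 d * ((1 + e) ^ ((d:ℝ)/2) - (max (1 - e) 0) ^ ((d:ℝ)/2))
      ≤ rho0 d * ((1 + ((2:ℝ)^d - 1)*e) - (1 - (d:ℝ)*e)) := by
        apply mul_le_mul_of_nonneg_left _ h0
        linarith
  _ = rho0 d * ((2:ℝ)^d - 1 + d) * e := by ring
  _ ≤ rho0 d * ((2:ℝ)^d + d) * e := by nlinarith

lemma g_cont (d : ℕ) (ρ : ℝ) :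
    Continuous (fun e => (max (Real.sqrt ρ - Real.sqrt (fvol d e)) 0) ^ 2) := by
  have hc : Continuous (fvol d) := by
    unfold fvol
    apply continuous_const.mul
    apply Continuous.sub
    · exact (continuous_const.add continuous_id).rpow_const (fun x => Or.inr (by positivity))
    · exact ((continuous_const.sub continuous_id).max continuous_const).rpow_const
        (fun x => Or.inr (by positivity))
  exact (((continuous_const.sub (Real.continuous_sqrt.comp hc)).max continuous_const).pow 2)

lemma Rfun_lb (d : ℕ) (hd : 1 ≤ d) {ρ a : ℝ} (hρ : 0 ≤ ρ) (ha : 0 ≤ a)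
    (hf : ∀ e ∈ Set.Ioc (0:ℝ) a, fvol d e ≤ ρ/4) : a * (ρ/4) ≤ Rfun d ρ := by
  set g : ℝ → ℝ := fun e => (max (Real.sqrt ρ - Real.sqrt (fvol d e)) 0) ^ 2 with hg
  have hgc : Continuous g := g_cont d ρ
  have hg0 : ∀ e, 0 ≤ g e := fun e => by positivity
  have hgle : ∀ e, g e ≤ ρ := by
    intro e
    have h1 : max (Real.sqrt ρ - Real.sqrt (fvol d e)) 0 ≤ Real.sqrt ρ :=
      max_le (by nlinarith [Real.sqrt_nonneg (fvol d e)]) (Real.sqrt_nonneg ρ)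
    calc g e ≤ (Real.sqrt ρ)^2 := by
          apply pow_le_pow_left₀ (le_max_right _ _) h1
    _ = ρ := Real.sq_sqrt hρ
  have hρ0 : 0 < rho0 d := rho0_pos d hd
  have hp : (0:ℝ) < (d:ℝ)/2 := by
    have : (1:ℝ) ≤ (d:ℝ) := by exact_mod_cast hd
    linarith
  -- a cutoff beyond which g vanishes
  set E : ℝ := (1 + ρ/rho0 d) ^ (((d:ℝ)/2)⁻¹) with hE
  have hEnn : 0 ≤ E := Real.rpow_nonneg (by positivity) _
  have hgE : ∀ e, E ≤ e → g e = 0 := by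
    intro e he
    have h1 : ρ ≤ fvol d e := by
      have h2 : fvol d E ≤ fvol d e := fvol_mono d hEnn he
      have h3 : (max (1 - E) 0 : ℝ) ^ ((d:ℝ)/2) ≤ 1 := by
        apply Real.rpow_le_one (le_max_right _ _) _ hp.le
        rcases max_cases (1-E) (0:ℝ) with ⟨h,_⟩|⟨h,_⟩ <;> rw [h] <;> linarith
      have h4 : (1 + ρ/rho0 d) ≤ (1 + E) ^ ((d:ℝ)/2) := by
        calc (1 + ρ/rho0 d) = (E) ^ ((d:ℝ)/2) := by
              rw [hE, Real.rpow_inv_rpow (by positivity) hp.ne']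
        _ ≤ (1 + E) ^ ((d:ℝ)/2) := Real.rpow_le_rpow hEnn (by linarith) hp.le
      have h5 : ρ ≤ rho0 d * ((1 + E) ^ ((d:ℝ)/2) - (max (1 - E) 0) ^ ((d:ℝ)/2)) := by
        have := mul_le_mul_of_nonneg_left h4 hρ0.le
        rw [mul_add, mul_one] at this
        have h6 : rho0 d * (ρ/rho0 d) = ρ := by field_simp
        nlinarith [mul_nonneg hρ0.le (sub_nonneg.2 h3)]
      calc ρ ≤ fvol d E := h5
      _ ≤ fvol d e := h2
    have h7 : Real.sqrt ρ - Real.sqrt (fvol d e) ≤ 0 :=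
      sub_nonpos.2 (Real.sqrt_le_sqrt h1)
    simp only [hg]
    rw [max_eq_right h7]
    norm_num
  -- integrability
  have hind : Integrable ((Set.Ioc (0:ℝ) E).indicator (fun _ => ρ)) := by
    rw [integrable_indicator_iff measurableSet_Ioc]
    exact integrableOn_const (by rw [Real.volume_Ioc]; exact ENNReal.ofReal_ne_top)
  have hgint : IntegrableOn g (Set.Ioi (0:ℝ)) := by
    apply Integrable.mono' hind.restrict hgc.aestronglyMeasurable.restrict
    rw [ae_restrict_iff' measurableSet_Ioi]
    apply ae_of_all
    intro e he
    rw [Real.norm_eq_abs, abs_of_nonneg (hg0 e)]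
    by_cases h : e ≤ E
    · rw [Set.indicator_of_mem (Set.mem_Ioc.2 ⟨he, h⟩)]
      exact hgle e
    · rw [Set.indicator_of_notMem (by simp [Set.mem_Ioc]; intro _; linarith)]
      rw [hgE e (by linarith)]
  -- the lower bound
  have key1 : a * (ρ/4) = ∫ _ in Set.Ioc (0:ℝ) a, (ρ/4) := by
    rw [setIntegral_const, Real.volume_real_Ioc_of_le ha, smul_eq_mul, sub_zero]
  have key2 : ∫ _ in Set.Ioc (0:ℝ) a, (ρ/4) ≤ ∫ e in Set.Ioc (0:ℝ) a, g e := by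
    apply setIntegral_mono_on (integrableOn_const (by rw [Real.volume_Ioc]; exact ENNReal.ofReal_ne_top))
      (hgint.mono_set Set.Ioc_subset_Ioi_self) measurableSet_Ioc
    intro e he
    have hfe : fvol d e ≤ ρ/4 := hf e he
    have hs4 : Real.sqrt (ρ/4) = Real.sqrt ρ / 2 := by
      rw [show ρ/4 = ρ * (1/2)^2 by ring, Real.sqrt_mul hρ, Real.sqrt_sq (by norm_num)]
      ring
    have h1 : Real.sqrt (fvol d e) ≤ Real.sqrt ρ / 2 := by
      rw [← hs4]; exact Real.sqrt_le_sqrt hfe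
    have h2 : Real.sqrt ρ / 2 ≤ max (Real.sqrt ρ - Real.sqrt (fvol d e)) 0 := by
      apply le_max_of_le_left
      have := Real.sqrt_nonneg ρ
      linarith
    calc ρ/4 = (Real.sqrt ρ / 2)^2 := by
          rw [div_pow, Real.sq_sqrt hρ]; norm_num
    _ ≤ g e := by
          apply pow_le_pow_left₀ (by positivity) h2
  have key3 : ∫ e in Set.Ioc (0:ℝ) a, g e ≤ ∫ e in Set.Ioi (0:ℝ), g e := by
    apply setIntegral_mono_set hgint (ae_of_all _ hg0)
      (HasSubset.Subset.eventuallyLE Set.Ioc_subset_Ioi_self)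
  calc a * (ρ/4) = ∫ _ in Set.Ioc (0:ℝ) a, (ρ/4) := key1
  _ ≤ ∫ e in Set.Ioc (0:ℝ) a, g e := key2
  _ ≤ ∫ e in Set.Ioi (0:ℝ), g e := key3
  _ = Rfun d ρ := rfl

lemma deltaT_le_rpow (d : ℕ) (hd : 1 ≤ d) {ρ : ℝ} (hρ : 0 ≤ ρ) :
    deltaTsc1 d ρ ≤ (rho0 d + ρ) ^ (1 + 2/(d:ℝ)) := by
  have hρ0 : 0 < rho0 d := rho0_pos d hd
  have hdr : (1:ℝ) ≤ (d:ℝ) := by exact_mod_cast hd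
  have h1 : (0:ℝ) ≤ (rho0 d) ^ (1 + 2/(d:ℝ)) := Real.rpow_nonneg hρ0.le _
  have h2 : (0:ℝ) ≤ (((d:ℝ) + 2) / d) * (rho0 d) ^ (2/(d:ℝ)) * ρ := by
    have : (0:ℝ) ≤ (rho0 d) ^ (2/(d:ℝ)) := Real.rpow_nonneg hρ0.le _
    have hq : (0:ℝ) ≤ ((d:ℝ)+2)/d := by positivity
    positivity
  unfold deltaTsc1
  linarith

lemma deltaT_le_sq (d : ℕ) (hd : 1 ≤ d) :
    ∃ C : ℝ, 0 < C ∧ ∀ ρ : ℝ, 0 ≤ ρ → ρ ≤ 4 * rho0 d * 2 ^ ((d:ℝ)/2) →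
      deltaTsc1 d ρ ≤ C * ρ^2 := by
  have hρ0 : 0 < rho0 d := rho0_pos d hd
  rcases eq_or_lt_of_le hd with h1 | h2
  · -- d = 1
    refine ⟨3 * rho0 d + 4 * rho0 d * 2 ^ ((d:ℝ)/2), by positivity, ?_⟩
    intro ρ hρ hρM
    have hd1 : d = 1 := h1.symm
    subst hd1
    have e3 : (1 + 2/((1:ℕ):ℝ)) = ((3:ℕ):ℝ) := by norm_num
    have e2 : (2/((1:ℕ):ℝ)) = ((2:ℕ):ℝ) := by norm_num
    unfold deltaTsc1
    rw [e3, e2, Real.rpow_natCast, Real.rpow_natCast, Real.rpow_natCast]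
    have : (((1:ℕ):ℝ) + 2) / ((1:ℕ):ℝ) = 3 := by norm_num
    rw [this]
    nlinarith [hρ0.le, sq_nonneg ρ]
  · -- d ≥ 2
    have hdr : (2:ℝ) ≤ (d:ℝ) := by exact_mod_cast h2
    set s : ℝ := 2/(d:ℝ) with hs
    have hs0 : 0 < s := by positivity
    have hs1 : s ≤ 1 := by
      rw [hs, div_le_one (by linarith)]; linarith
    refine ⟨s * (rho0 d)^s / rho0 d, by positivity, ?_⟩
    intro ρ hρ _
    set t : ℝ := ρ / rho0 d with ht
    have ht0 : 0 ≤ t := by positivity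
    have hρ0' : rho0 d ≠ 0 := hρ0.ne'
    have hT : rho0 d * t = ρ := by rw [ht]; field_simp
    have hb : (1+t)^s ≤ 1 + s*t :=
      rpow_one_add_le_one_add_mul_self (by linarith) hs0.le hs1
    have e1 : (rho0 d + ρ) ^ s = (rho0 d)^s * (1+t)^s := by
      rw [← Real.mul_rpow hρ0.le (by linarith)]
      congr 1
      rw [ht]; field_simp
    have e2 : (rho0 d + ρ) ^ (1+s) = (rho0 d + ρ) * (rho0 d + ρ)^s := by
      rw [Real.rpow_add (by linarith) 1 s, Real.rpow_one]
    have e3 : (rho0 d) ^ (1+s) = rho0 d * (rho0 d)^s := by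
      rw [Real.rpow_add hρ0 1 s, Real.rpow_one]
    have hq : (((d:ℝ) + 2) / d) = 1 + s := by
      rw [hs]; field_simp
    have key : (rho0 d + ρ) ^ (1+s) ≤
        (rho0 d)^(1+s) + (1+s) * (rho0 d)^s * ρ + (s * (rho0 d)^s / rho0 d) * ρ^2 := by
      rw [e2, e1, e3]
      have step : (rho0 d + ρ) * ((rho0 d)^s * (1+t)^s) ≤
          (rho0 d + ρ) * ((rho0 d)^s * (1 + s*t)) := by
        apply mul_le_mul_of_nonneg_left _ (by linarith)
        exact mul_le_mul_of_nonneg_left hb (Real.rpow_nonneg hρ0.le _)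
      refine step.trans (le_of_eq ?_)
      have hC : (s * (rho0 d)^s / rho0 d) * ρ^2 = s * (rho0 d)^s * t * ρ := by
        rw [ht, div_mul_eq_mul_div, mul_comm (s * (rho0 d)^s) (ρ / rho0 d), ← mul_assoc]
        field_simp
      rw [hC]
      linear_combination (s * (rho0 d)^s) * hT
    unfold deltaTsc1
    rw [← hs, hq]
    linarith

/-- there is `K̂(d) > 0` with `R_d(ρ) ≥ K̂(d) δT^{sc}_1(ρ)` for all
`ρ ≥ 0`. -/
theorem Rfun_ge_deltaTsc (d : ℕ) (hd : 1 ≤ d) :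
    ∃ K : ℝ, 0 < K ∧ ∀ ρ : ℝ, 0 ≤ ρ → K * deltaTsc1 d ρ ≤ Rfun d ρ := by
  obtain ⟨C1, hC1, hC1b⟩ := deltaT_le_sq d hd
  have hρ0 : 0 < rho0 d := rho0_pos d hd
  have hdr : (1:ℝ) ≤ (d:ℝ) := by exact_mod_cast hd
  set p : ℝ := (d:ℝ)/2 with hp
  have hp0 : 0 < p := by rw [hp]; linarith
  set L : ℝ := rho0 d * ((2:ℝ)^d + d) with hL
  have hL0 : 0 < L := by rw [hL]; positivity
  set M : ℝ := 4 * rho0 d * 2 ^ p with hM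
  have h2p1 : (1:ℝ) ≤ (2:ℝ)^p := Real.one_le_rpow one_le_two hp0.le
  have hM0 : 0 < M := by rw [hM]; positivity
  have hML : M ≤ 4 * L := by
    have h1 : (2:ℝ)^p ≤ (2:ℝ)^((d:ℝ)) :=
      Real.rpow_le_rpow_of_exponent_le one_le_two (by rw [hp]; linarith)
    have h2 : (2:ℝ)^((d:ℝ)) = (2:ℝ)^d := Real.rpow_natCast 2 d
    have h3 : (0:ℝ) ≤ (d:ℝ) := by linarith
    rw [hM, hL]; nlinarith
  set q : ℝ := 1 + 2/(d:ℝ) with hq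
  have hq0 : 0 < q := by rw [hq]; positivity
  have hpinv : p⁻¹ = 2/(d:ℝ) := by rw [hp]; rw [inv_div]
  have h4r : (0:ℝ) < (4*rho0 d)^(p⁻¹) := Real.rpow_pos_of_pos (by positivity) _
  have h2q : (0:ℝ) < (2:ℝ)^q := Real.rpow_pos_of_pos two_pos _
  set Ksmall : ℝ := 1/(16*L*C1) with hKsdef
  set Klarge : ℝ := 1/(8 * (4*rho0 d)^(p⁻¹) * 2^q) with hKldef
  have hKs : 0 < Ksmall := by rw [hKsdef]; positivity
  have hKl : 0 < Klarge := by rw [hKldef]; positivity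
  refine ⟨min Ksmall Klarge, lt_min hKs hKl, ?_⟩
  intro ρ hρ
  have hRnn : 0 ≤ Rfun d ρ := by
    have := Rfun_lb d hd hρ le_rfl (fun e he => absurd he.2 (not_le.2 he.1))
    simpa using this
  rcases le_or_gt (deltaTsc1 d ρ) 0 with hneg | hpos
  · calc min Ksmall Klarge * deltaTsc1 d ρ ≤ 0 :=
        mul_nonpos_of_nonneg_of_nonpos (lt_min hKs hKl).le hneg
    _ ≤ Rfun d ρ := hRnn
  rcases le_or_gt ρ M with hsmall | hlarge
  · -- small regime
    set a : ℝ := ρ/(4*L) with hadef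
    have ha : 0 ≤ a := by rw [hadef]; positivity
    have ha1 : a ≤ 1 := by
      rw [hadef, div_le_one (by positivity)]; linarith
    have hf : ∀ e ∈ Set.Ioc (0:ℝ) a, fvol d e ≤ ρ/4 := by
      rintro e ⟨he0, hea⟩
      have h1 : fvol d e ≤ L * e := by
        have := fvol_le_linear d hd he0.le (le_trans hea ha1)
        rw [← hL] at this
        exact this
      calc fvol d e ≤ L * e := h1
      _ ≤ L * a := mul_le_mul_of_nonneg_left hea hL0.le
      _ = ρ/4 := by rw [hadef]; field_simp
    have hRf := Rfun_lb d hd hρ ha hf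
    have hδ : deltaTsc1 d ρ ≤ C1 * ρ^2 := hC1b ρ hρ hsmall
    calc min Ksmall Klarge * deltaTsc1 d ρ ≤ Ksmall * deltaTsc1 d ρ :=
          mul_le_mul_of_nonneg_right (min_le_left _ _) hpos.le
    _ ≤ Ksmall * (C1 * ρ^2) := mul_le_mul_of_nonneg_left hδ hKs.le
    _ = a * (ρ/4) := by
          rw [hKsdef, hadef]; field_simp; ring
    _ ≤ Rfun d ρ := hRf
  · -- large regime
    have hρpos : 0 < ρ := lt_trans hM0 hlarge
    obtain ⟨E, hEdef⟩ : ∃ E : ℝ, E = (ρ/(4*rho0 d))^(p⁻¹) := ⟨_, rfl⟩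
    have hE2 : (2:ℝ) ≤ E := by
      have h1 : (2:ℝ)^p ≤ ρ/(4*rho0 d) := by
        rw [le_div_iff₀ (by positivity)]
        rw [hM] at hlarge
        nlinarith
      calc (2:ℝ) = ((2:ℝ)^p)^(p⁻¹) := (Real.rpow_rpow_inv (by norm_num) hp0.ne').symm
      _ ≤ E := by
          rw [hEdef]
          exact Real.rpow_le_rpow (by positivity) h1 (by positivity)
    have he1 : (1:ℝ) ≤ E - 1 := by linarith
    have hf : ∀ e ∈ Set.Ioc (0:ℝ) (E-1), fvol d e ≤ ρ/4 := by
      rintro e ⟨he0, hea⟩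
      calc fvol d e ≤ rho0 d * (1+e)^p := fvol_le_pow d he0.le
      _ ≤ rho0 d * E^p := by
          apply mul_le_mul_of_nonneg_left _ hρ0.le
          exact Real.rpow_le_rpow (by linarith) (by linarith) hp0.le
      _ = rho0 d * (ρ/(4*rho0 d)) := by
          rw [hEdef, Real.rpow_inv_rpow (by positivity) hp0.ne']
      _ = ρ/4 := by field_simp
    have hRf := Rfun_lb d hd hρ (by linarith : (0:ℝ) ≤ E - 1) hf
    have hδ1 : deltaTsc1 d ρ ≤ (rho0 d + ρ)^q := deltaT_le_rpow d hd hρ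
    have hδ2 : (rho0 d + ρ)^q ≤ (2*ρ)^q := by
      apply Real.rpow_le_rpow (by positivity) _ hq0.le
      rw [hM] at hlarge
      nlinarith
    have hδ3 : (2*ρ)^q = 2^q * ρ^q := Real.mul_rpow (by norm_num) hρ
    have hρq : ρ^q = ρ * ρ^(p⁻¹) := by
      rw [hq, hpinv, Real.rpow_add hρpos, Real.rpow_one]
    have hEeq : E = ρ^(p⁻¹) / (4*rho0 d)^(p⁻¹) := by
      rw [hEdef, Real.div_rpow hρ (by positivity)]
    calc min Ksmall Klarge * deltaTsc1 d ρ ≤ Klarge * deltaTsc1 d ρ :=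
          mul_le_mul_of_nonneg_right (min_le_right _ _) hpos.le
    _ ≤ Klarge * (2^q * ρ^q) := by
          apply mul_le_mul_of_nonneg_left _ hKl.le
          calc deltaTsc1 d ρ ≤ (rho0 d + ρ)^q := hδ1
          _ ≤ (2*ρ)^q := hδ2
          _ = 2^q * ρ^q := hδ3
    _ = E * ρ / 8 := by
          rw [hKldef, hρq, hEeq]
          generalize hA : ((4:ℝ)*rho0 d)^(p⁻¹) = A at h4r ⊢
          generalize hB : ((2:ℝ):ℝ)^q = B at h2q ⊢
          field_simp
    _ ≤ (E-1) * (ρ/4) := by linarith [mul_nonneg hρ (sub_nonneg.2 hE2)]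
    _ ≤ Rfun d ρ := hRf
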